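/- In the Milnor–Witt K-theory of a field F, for every unit a ∈ F^× and every integer n ≥ 1, the relation [a^n] = n_ε · [a] holds in K^{MW}_1(F), where n_ε = Σ_{i=1}^{n} ⟨(−1)^{i−1}⟩ ∈ K^{MW}_0(F). -/
import Mathlib


/-- In Milnor–Witt K-theory of a field `F` (presented as a ring with generators
`[a]` for `a ∈ Fˣ` and `η`, subject to the Steinberg relation, `[ab] = [a]+[b]+η[a][b]`,
`[a]η = η[a]` and `η·h = 0` with `h = 2 + η[−1]`), one has `[a^n] = n_ε · [a]`, where
`n_ε = ∑_{i=1}^n ⟨(−1)^{i−1}⟩` and `⟨u⟩ = 1 + η[u]`. -/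
theorem milnorWitt_pow_eq_neps_smul (F : Type) [Field F] (R : Type) [Ring R]
    (symb : Fˣ → R) (eta : R)
    (h_steinberg : ∀ a b : Fˣ, (a : F) + (b : F) = 1 → symb a * symb b = 0)
    (h_mul : ∀ a b : Fˣ, symb (a * b) = symb a + symb b + eta * symb a * symb b)
    (h_comm : ∀ a : Fˣ, symb a * eta = eta * symb a)
    (h_h : eta * (2 + eta * symb (-1)) = 0)
    (a : Fˣ) (n : ℕ) (hn : 1 ≤ n) :
    symb (a ^ n) = (∑ i ∈ Finset.range n, (1 + eta * symb ((-1 : Fˣ) ^ i))) * symb a := by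
  clear hn
  -- η·η·[−1] = −(2η)
  have hk : eta * eta * symb (-1) = -(2 * eta) := by
    have h := h_h
    rw [mul_add, add_comm] at h
    have h2 : eta * (eta * symb (-1)) = -(eta * 2) := eq_neg_of_add_eq_zero_left h
    calc eta * eta * symb (-1) = eta * (eta * symb (-1)) := by rw [mul_assoc]
      _ = -(eta * 2) := h2
      _ = -(2 * eta) := by rw [mul_two, two_mul]
  -- η[1] = 0
  have h1e : eta * symb 1 = 0 := by
    have e1 : ((-1 : Fˣ) * (-1)) = 1 := by simp
    have hs := h_mul (-1) (-1)
    rw [e1] at hs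
    rw [hs]
    have : eta * (symb (-1) + symb (-1) + eta * symb (-1) * symb (-1))
        = eta * symb (-1) + eta * symb (-1) + (eta * eta * symb (-1)) * symb (-1) := by
      noncomm_ring
    rw [this, hk]
    noncomm_ring
  -- [1] = 0
  have h1 : symb (1 : Fˣ) = 0 := by
    have hs := h_mul 1 1
    rw [one_mul, h1e, zero_mul, add_zero] at hs
    exact (left_eq_add.mp hs)
  -- ⟨x⟩⟨y⟩ = ⟨xy⟩
  have hdm : ∀ x y : Fˣ, (1 + eta * symb x) * (1 + eta * symb y) = 1 + eta * symb (x * y) := by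
    intro x y
    rw [h_mul x y]
    have hc := h_comm x
    calc (1 + eta * symb x) * (1 + eta * symb y)
        = 1 + eta * symb x + eta * symb y + eta * (symb x * eta) * symb y := by noncomm_ring
      _ = 1 + eta * (symb x + symb y + eta * symb x * symb y) := by rw [hc]; noncomm_ring
  -- if [x⁻¹]z = 0 then [x]z = 0
  have hzero : ∀ (x : Fˣ) (z : R), symb x⁻¹ * z = 0 → symb x * z = 0 := by
    intro x z hz
    have h := h_mul x x⁻¹
    rw [mul_inv_cancel, h1] at h
    have hsum : symb x + symb x⁻¹ + eta * symb x * symb x⁻¹ = 0 := h.symm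
    have h0 : (symb x + symb x⁻¹ + eta * symb x * symb x⁻¹) * z = 0 := by rw [hsum, zero_mul]
    have hexp : (symb x + symb x⁻¹ + eta * symb x * symb x⁻¹) * z
        = symb x * z + symb x⁻¹ * z + eta * symb x * (symb x⁻¹ * z) := by noncomm_ring
    rw [hexp, hz, mul_zero, add_zero, add_zero] at h0
    exact h0
  -- [x][y⁻¹] = 0 whenever [x][y] = 0
  have hzinv : ∀ (x y : Fˣ), symb x * symb y = 0 → symb x * symb y⁻¹ = 0 := by
    intro x y hxy
    have h := h_mul y y⁻¹
    rw [mul_inv_cancel, h1] at h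
    have hsum : symb y + symb y⁻¹ + eta * symb y * symb y⁻¹ = 0 := h.symm
    have h0 : symb x * (symb y + symb y⁻¹ + eta * symb y * symb y⁻¹) = 0 := by
      rw [hsum, mul_zero]
    have h3 : symb x * (eta * symb y * symb y⁻¹)
        = eta * (symb x * symb y) * symb y⁻¹ := by
      have : symb x * (eta * symb y * symb y⁻¹) = (symb x * eta) * (symb y * symb y⁻¹) := by
        noncomm_ring
      rw [this, h_comm x]; noncomm_ring
    have hexp : symb x * (symb y + symb y⁻¹ + eta * symb y * symb y⁻¹)
        = symb x * symb y + symb x * symb y⁻¹ + symb x * (eta * symb y * symb y⁻¹) := by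
      noncomm_ring
    rw [hexp, h3, hxy, mul_zero, zero_mul, zero_add, add_zero] at h0
    exact h0
  -- [x][−x] = 0
  have hmin : ∀ x : Fˣ, symb x * symb (-x) = 0 := by
    intro x
    by_cases hx1 : x = 1
    · subst hx1; rw [h1, zero_mul]
    · have hxF : ((x : F)) ≠ 1 := fun h => hx1 (Units.val_eq_one.mp h)
      have hb0 : (1 : F) - (x : F) ≠ 0 := sub_ne_zero.mpr (Ne.symm hxF)
      have hxiF : ((x⁻¹ : Fˣ) : F) ≠ 1 := by
        intro h
        exact hx1 (inv_eq_one.mp (Units.val_eq_one.mp h))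
      have hd0 : (1 : F) - ((x⁻¹ : Fˣ) : F) ≠ 0 := sub_ne_zero.mpr (Ne.symm hxiF)
      set b : Fˣ := Units.mk0 (1 - (x : F)) hb0 with hbdef
      set d : Fˣ := Units.mk0 (1 - ((x⁻¹ : Fˣ) : F)) hd0 with hddef
      have hab : symb x * symb b = 0 := h_steinberg x b (by simp [hbdef])
      have had' : symb x⁻¹ * symb d = 0 := h_steinberg x⁻¹ d (by simp [hddef])
      have had : symb x * symb d = 0 := hzero x _ had'
      have hadinv : symb x * symb d⁻¹ = 0 := hzinv x d had
      have hbd : -x = b * d⁻¹ := by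
        have hx0 : (x : F) ≠ 0 := Units.ne_zero x
        have hd0' : (1 : F) - (x : F)⁻¹ ≠ 0 := by
          rw [Units.val_inv_eq_inv_val] at hd0; exact hd0
        ext
        rw [hbdef, hddef]
        simp only [Units.val_mul, Units.val_inv_eq_inv_val, Units.val_mk0, Units.val_neg]
        rw [eq_comm, mul_inv_eq_iff_eq_mul₀ hd0']
        field_simp
        ring
      rw [hbd, h_mul b d⁻¹]
      have h3 : symb x * (eta * symb b * symb d⁻¹)
          = eta * (symb x * symb b) * symb d⁻¹ := by
        have : symb x * (eta * symb b * symb d⁻¹) = (symb x * eta) * (symb b * symb d⁻¹) := by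
          noncomm_ring
        rw [this, h_comm x]; noncomm_ring
      have hexp : symb x * (symb b + symb d⁻¹ + eta * symb b * symb d⁻¹)
          = symb x * symb b + symb x * symb d⁻¹ + symb x * (eta * symb b * symb d⁻¹) := by
        noncomm_ring
      rw [hexp, h3, hab, hadinv, mul_zero, zero_mul, add_zero, add_zero]
  -- η[x][x] = η[−1][x]
  have hkey : ∀ x : Fˣ, eta * (symb x * symb x) = eta * (symb (-1) * symb x) := by
    intro x
    have hmx : symb (-x) * symb x = 0 := by
      have h := hmin (-x); rw [neg_neg] at h; exact h
    have hexp : symb (-x) = symb (-1) + symb x + eta * symb (-1) * symb x := by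
      have h := h_mul (-1) x
      rw [show ((-1 : Fˣ) * x) = -x from by simp] at h
      exact h
    have h0 : (symb (-1) + symb x + eta * symb (-1) * symb x) * symb x = 0 := by
      rw [← hexp]; exact hmx
    have h0' : eta * ((symb (-1) + symb x + eta * symb (-1) * symb x) * symb x) = 0 := by
      rw [h0, mul_zero]
    have hre : eta * ((symb (-1) + symb x + eta * symb (-1) * symb x) * symb x)
        = eta * (symb (-1) * symb x) + eta * (symb x * symb x)
          + (eta * eta * symb (-1)) * (symb x * symb x) := by noncomm_ring
    rw [hre, hk] at h0'
    have h2 : eta * (symb (-1) * symb x) - eta * (symb x * symb x)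
        = eta * (symb (-1) * symb x) + eta * (symb x * symb x)
          + (-(2 * eta)) * (symb x * symb x) := by noncomm_ring
    rw [h0'] at h2
    exact (sub_eq_zero.mp h2).symm
  -- main induction
  induction n with
  | zero => simp [h1]
  | succ n ih =>
    rw [pow_succ, h_mul (a ^ n) a, ih]
    set S : R := ∑ i ∈ Finset.range n, (1 + eta * symb ((-1 : Fˣ) ^ i)) with hSdef
    have hSe : S * eta = eta * S := by
      rw [hSdef, Finset.sum_mul, Finset.mul_sum]
      apply Finset.sum_congr rfl
      intro i _
      have hc := h_comm ((-1 : Fˣ) ^ i)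
      calc (1 + eta * symb ((-1 : Fˣ) ^ i)) * eta
          = eta + eta * (symb ((-1 : Fˣ) ^ i) * eta) := by noncomm_ring
        _ = eta * (1 + eta * symb ((-1 : Fˣ) ^ i)) := by rw [hc]; noncomm_ring
    have h5 : eta * (S * symb a) * symb a = S * (eta * (symb (-1) * symb a)) := by
      calc eta * (S * symb a) * symb a = (eta * S) * (symb a * symb a) := by noncomm_ring
        _ = (S * eta) * (symb a * symb a) := by rw [hSe]
        _ = S * (eta * (symb a * symb a)) := by noncomm_ring
        _ = S * (eta * (symb (-1) * symb a)) := by rw [hkey a]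
    have hS : (∑ i ∈ Finset.range (n + 1), (1 + eta * symb ((-1 : Fˣ) ^ i)))
        = 1 + S * (1 + eta * symb (-1)) := by
      rw [Finset.sum_range_succ']
      have hterm : ∀ i, (1 + eta * symb ((-1 : Fˣ) ^ (i + 1)))
          = (1 + eta * symb ((-1 : Fˣ) ^ i)) * (1 + eta * symb (-1)) := by
        intro i
        rw [hdm, pow_succ]
      simp only [hterm, pow_zero, h1, mul_zero, add_zero]
      rw [hSdef, ← Finset.sum_mul]
      noncomm_ring
    rw [hS]
    have hgoal : S * symb a + symb a + eta * (S * symb a) * symb a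
        = S * symb a + symb a + S * (eta * (symb (-1) * symb a)) := by rw [h5]
    rw [hgoal]
    noncomm_ring
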